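/- If x_n ≥ 0, y_n ≥ 0 and a x_n + b y_n ≤ a, then the next iterate satisfies x_{n+1} ≥ 0 and a x_{n+1} + b y_{n+1} ≤ a, provided a ≥ d and a ≤ 4; i.e., the triangle {x ≥ 0, y ≥ 0, a x + b y ≤ a} is forward invariant under F when 0 < d ≤ a ≤ 4. -/

import Mathlib

/-!
The logistic part a x (1 - x) is at most a / 4 ≤ 1, so a x' + b y' is at most
a² x (1 - x) ≤ a once the predation terms are dropped: they contribute
-(a - d) b x y ≤ 0 because d ≤ a.
-/

theorem logistic_le_one {a : ℝ} (ha₀ : 0 ≤ a) (ha₄ : a ≤ 4) (x : ℝ) :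
    a * x * (1 - x) ≤ 1 := by
  nlinarith [mul_nonneg ha₀ (sq_nonneg (2 * x - 1))]

theorem triangle_invariant (a b d x y : ℝ) (hb : 0 < b) (hd : 0 < d)
    (hda : d ≤ a) (ha4 : a ≤ 4) (hx : 0 ≤ x) (hy : 0 ≤ y) (hT : a * x + b * y ≤ a) :
    0 ≤ a * x * (1 - x) - b * x * y ∧ 0 ≤ d * x * y ∧
    a * (a * x * (1 - x) - b * x * y) + b * (d * x * y) ≤ a := by
  have ha : 0 ≤ a := hd.le.trans hda
  have hby : b * y ≤ a * (1 - x) := by linarith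
  have hbxy : 0 ≤ b * x * y := by positivity
  refine ⟨?_, by positivity, ?_⟩
  · calc 0 ≤ x * (a * (1 - x) - b * y) := mul_nonneg hx (sub_nonneg.mpr hby)
      _ = a * x * (1 - x) - b * x * y := by ring
  · calc a * (a * x * (1 - x) - b * x * y) + b * (d * x * y)
        = a * (a * x * (1 - x)) - (a - d) * (b * x * y) := by ring
      _ ≤ a * (a * x * (1 - x)) := sub_le_self _ (mul_nonneg (sub_nonneg.mpr hda) hbxy)
      _ ≤ a * 1 := mul_le_mul_of_nonneg_left (logistic_le_one ha ha4 x) ha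
      _ = a := mul_one a
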